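/- Let (X1,Y1) and (X2,Y2) be independent pairs of discrete random variables, where X1 and X2 take values in {0,1} and have the same marginal distribution P_X, and Y1, Y2 take values in finite sets. Let U1 = X1 ⊕ X2 (addition in F_2) and U2 = X2. Then for every α ≥ 0 with α ≠ 1, the basic polar transformation conserves total conditional Rényi entropy: H_α(U1 | (Y1,Y2)) + H_α(U2 | (Y1,Y2,U1)) = H_α(X1|Y1) + H_α(X2|Y2). -/
import Mathlib


/-- `rpow0 a α = a ^ α` (real power) with the convention `0 ^ 0 = 0`,
so that at `α = 0` sums of `rpow0` count support sizes. -/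
noncomputable def rpow0 (a α : ℝ) : ℝ := if a = 0 then 0 else a ^ α

/-- Conditional Rényi entropy of order `α` (base-2 logarithm) of a joint
distribution `p` on `X × Y`:
`H_α(X|Y) = (1/(1-α)) * log₂ ((Σ_{x,y} p(x,y)^α) / (Σ_y P_Y(y)^α))`. -/
noncomputable def condRenyi {X Y : Type*} [Fintype X] [Fintype Y]
    (α : ℝ) (p : X × Y → ℝ) : ℝ :=
  (1 - α)⁻¹ * Real.logb 2
    ((∑ z : X × Y, rpow0 (p z) α) / (∑ y : Y, rpow0 (∑ x : X, p (x, y)) α))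

lemma rpow0_nonneg {a : ℝ} (ha : 0 ≤ a) (α : ℝ) : 0 ≤ rpow0 a α := by
  unfold rpow0
  split
  · exact le_rfl
  · exact Real.rpow_nonneg ha α

lemma rpow0_pos {a : ℝ} (ha : 0 < a) (α : ℝ) : 0 < rpow0 a α := by
  unfold rpow0
  rw [if_neg ha.ne']
  exact Real.rpow_pos_of_pos ha α

lemma rpow0_mul {a b : ℝ} (ha : 0 ≤ a) (hb : 0 ≤ b) (α : ℝ) :
    rpow0 (a * b) α = rpow0 a α * rpow0 b α := by
  rcases ha.eq_or_lt with h | h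
  · simp [rpow0, ← h]
  rcases hb.eq_or_lt with h' | h'
  · simp [rpow0, ← h']
  unfold rpow0
  rw [if_neg (mul_pos h h').ne', if_neg h.ne', if_neg h'.ne', Real.mul_rpow h.le h'.le]

lemma sum_rpow0_pos {ι : Type*} [Fintype ι] {p : ι → ℝ} (hp : ∀ i, 0 ≤ p i)
    (hs : ∑ i, p i = 1) (α : ℝ) : 0 < ∑ i, rpow0 (p i) α := by
  obtain ⟨i, hi⟩ : ∃ i, 0 < p i := by
    by_contra h
    push_neg at h
    rw [Finset.sum_eq_zero (fun i _ => le_antisymm (h i) (hp i))] at hs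
    exact one_ne_zero hs.symm
  exact lt_of_lt_of_le (rpow0_pos hi α)
    (Finset.single_le_sum (fun j _ => rpow0_nonneg (hp j) α) (Finset.mem_univ i))

lemma sum_prod_split {A B : Type*} [Fintype A] [Fintype B] (f : A → ℝ) (g : B → ℝ) :
    ∑ z : A × B, f z.1 * g z.2 = (∑ a, f a) * (∑ b, g b) := by
  rw [Fintype.sum_prod_type, ← Finset.sum_mul_sum]

/-- conservation of total conditional Rényi entropy under the basic
polar transform `U1 = X1 ⊕ X2`, `U2 = X2` applied to independent pairs
`(X1,Y1)`, `(X2,Y2)` with the same input marginal: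
`H_α(U1 | (Y1,Y2)) + H_α(U2 | (Y1,Y2,U1)) = H_α(X1|Y1) + H_α(X2|Y2)`
for all `α ≥ 0`, `α ≠ 1`. -/
theorem renyi_polar_conservation
    {Y1 Y2 : Type*} [Fintype Y1] [Fintype Y2]
    (p1 : ZMod 2 × Y1 → ℝ) (p2 : ZMod 2 × Y2 → ℝ)
    (h1 : ∀ z, 0 ≤ p1 z) (h2 : ∀ z, 0 ≤ p2 z)
    (hs1 : ∑ z, p1 z = 1) (hs2 : ∑ z, p2 z = 1)
    (hmarg : ∀ x : ZMod 2, ∑ y1, p1 (x, y1) = ∑ y2, p2 (x, y2))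
    (α : ℝ) (hα0 : 0 ≤ α) (hα1 : α ≠ 1) :
    condRenyi α (fun z : ZMod 2 × (Y1 × Y2) =>
        ∑ u2 : ZMod 2, p1 (z.1 + u2, z.2.1) * p2 (u2, z.2.2))
      + condRenyi α (fun z : ZMod 2 × (Y1 × Y2 × ZMod 2) =>
          p1 (z.2.2.2 + z.1, z.2.1) * p2 (z.1, z.2.2.1))
      = condRenyi α p1 + condRenyi α p2 := by
  classical
  set q1 : ZMod 2 × (Y1 × Y2) → ℝ :=
    fun z => ∑ u2 : ZMod 2, p1 (z.1 + u2, z.2.1) * p2 (u2, z.2.2) with hq1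
  set q2 : ZMod 2 × (Y1 × Y2 × ZMod 2) → ℝ :=
    fun z => p1 (z.2.2.2 + z.1, z.2.1) * p2 (z.1, z.2.2.1) with hq2
  -- marginal sums are 1
  have hm1s : ∑ y1 : Y1, ∑ x : ZMod 2, p1 (x, y1) = 1 := by
    rw [Finset.sum_comm, ← Fintype.sum_prod_type]; exact hs1
  have hm2s : ∑ y2 : Y2, ∑ x : ZMod 2, p2 (x, y2) = 1 := by
    rw [Finset.sum_comm, ← Fintype.sum_prod_type]; exact hs2
  -- inner-sum identity for q1's marginal
  have hinner : ∀ y : Y1 × Y2,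
      (∑ x : ZMod 2, q1 (x, y)) = (∑ x, p1 (x, y.1)) * (∑ x, p2 (x, y.2)) := by
    intro y
    calc ∑ x : ZMod 2, q1 (x, y)
        = ∑ u1 : ZMod 2, ∑ u2 : ZMod 2, p1 (u1 + u2, y.1) * p2 (u2, y.2) := rfl
      _ = ∑ u2 : ZMod 2, ∑ u1 : ZMod 2, p1 (u1 + u2, y.1) * p2 (u2, y.2) :=
          Finset.sum_comm
      _ = ∑ u2 : ZMod 2, (∑ u1 : ZMod 2, p1 (u1 + u2, y.1)) * p2 (u2, y.2) := by
          simp [Finset.sum_mul]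
      _ = ∑ u2 : ZMod 2, (∑ x : ZMod 2, p1 (x, y.1)) * p2 (u2, y.2) := by
          refine Finset.sum_congr rfl fun u2 _ => ?_
          congr 1
          exact Fintype.sum_equiv (Equiv.addRight u2)
            (fun u1 => p1 (u1 + u2, y.1)) (fun x => p1 (x, y.1)) (fun u1 => rfl)
      _ = (∑ x, p1 (x, y.1)) * ∑ x, p2 (x, y.2) := by rw [Finset.mul_sum]
  have hq1nonneg : ∀ z, 0 ≤ q1 z := fun z =>
    Finset.sum_nonneg fun u2 _ => mul_nonneg (h1 _) (h2 _)
  have hq1sum : ∑ z, q1 z = 1 := by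
    calc ∑ z : ZMod 2 × (Y1 × Y2), q1 z
        = ∑ x : ZMod 2, ∑ y : Y1 × Y2, q1 (x, y) := Fintype.sum_prod_type _
      _ = ∑ y : Y1 × Y2, ∑ x : ZMod 2, q1 (x, y) := Finset.sum_comm
      _ = ∑ y : Y1 × Y2, (fun y1 => ∑ x, p1 (x, y1)) y.1 * (fun y2 => ∑ x, p2 (x, y2)) y.2 := by
          refine Finset.sum_congr rfl fun y _ => hinner y
      _ = (∑ y1 : Y1, ∑ x, p1 (x, y1)) * ∑ y2 : Y2, ∑ x, p2 (x, y2) :=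
          sum_prod_split (fun y1 => ∑ x, p1 (x, y1)) (fun y2 => ∑ x, p2 (x, y2))
      _ = 1 := by rw [hm1s, hm2s, mul_one]
  -- key sum identities
  have hA : (∑ z : ZMod 2 × (Y1 × Y2 × ZMod 2), rpow0 (q2 z) α)
      = (∑ z : ZMod 2 × Y1, rpow0 (p1 z) α) * (∑ z : ZMod 2 × Y2, rpow0 (p2 z) α) := by
    let e : ZMod 2 × (Y1 × Y2 × ZMod 2) ≃ (ZMod 2 × Y1) × (ZMod 2 × Y2) :=
      { toFun := fun z => ((z.2.2.2 + z.1, z.2.1), (z.1, z.2.2.1))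
        invFun := fun w => (w.2.1, (w.1.2, w.2.2, w.1.1 - w.2.1))
        left_inv := by intro z; simp
        right_inv := by intro w; simp }
    calc ∑ z : ZMod 2 × (Y1 × Y2 × ZMod 2), rpow0 (q2 z) α
        = ∑ w : (ZMod 2 × Y1) × (ZMod 2 × Y2), rpow0 (p1 w.1) α * rpow0 (p2 w.2) α :=
          Fintype.sum_equiv e _ _ (fun z => by
            show rpow0 (p1 (z.2.2.2 + z.1, z.2.1) * p2 (z.1, z.2.2.1)) α = _
            exact rpow0_mul (h1 _) (h2 _) α)
      _ = _ := sum_prod_split (fun w => rpow0 (p1 w) α) (fun w => rpow0 (p2 w) α)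
  have hB : (∑ w : Y1 × Y2 × ZMod 2, rpow0 (∑ u2 : ZMod 2, q2 (u2, w)) α)
      = ∑ z : ZMod 2 × (Y1 × Y2), rpow0 (q1 z) α := by
    let e2 : (Y1 × Y2 × ZMod 2) ≃ ZMod 2 × (Y1 × Y2) :=
      { toFun := fun w => (w.2.2, (w.1, w.2.1))
        invFun := fun z => (z.2.1, (z.2.2, z.1))
        left_inv := by intro w; rfl
        right_inv := by intro z; rfl }
    exact Fintype.sum_equiv e2 _ _ (fun w => rfl)
  have hC : (∑ y : Y1 × Y2, rpow0 (∑ x : ZMod 2, q1 (x, y)) α)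
      = (∑ y : Y1, rpow0 (∑ x : ZMod 2, p1 (x, y)) α)
        * (∑ y : Y2, rpow0 (∑ x : ZMod 2, p2 (x, y)) α) := by
    calc ∑ y : Y1 × Y2, rpow0 (∑ x : ZMod 2, q1 (x, y)) α
        = ∑ y : Y1 × Y2, (fun y1 => rpow0 (∑ x, p1 (x, y1)) α) y.1
            * (fun y2 => rpow0 (∑ x, p2 (x, y2)) α) y.2 := by
          refine Finset.sum_congr rfl fun y _ => ?_
          rw [hinner y]
          exact rpow0_mul (Finset.sum_nonneg fun x _ => h1 _)
            (Finset.sum_nonneg fun x _ => h2 _) α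
      _ = _ := sum_prod_split (fun y1 => rpow0 (∑ x, p1 (x, y1)) α)
            (fun y2 => rpow0 (∑ x, p2 (x, y2)) α)
  -- positivity
  have hN1 : 0 < ∑ z : ZMod 2 × Y1, rpow0 (p1 z) α := sum_rpow0_pos h1 hs1 α
  have hN2 : 0 < ∑ z : ZMod 2 × Y2, rpow0 (p2 z) α := sum_rpow0_pos h2 hs2 α
  have hD1 : 0 < ∑ y : Y1, rpow0 (∑ x : ZMod 2, p1 (x, y)) α :=
    sum_rpow0_pos (fun y => Finset.sum_nonneg fun x _ => h1 _) hm1s α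
  have hD2 : 0 < ∑ y : Y2, rpow0 (∑ x : ZMod 2, p2 (x, y)) α :=
    sum_rpow0_pos (fun y => Finset.sum_nonneg fun x _ => h2 _) hm2s α
  have hNq1 : 0 < ∑ z : ZMod 2 × (Y1 × Y2), rpow0 (q1 z) α :=
    sum_rpow0_pos hq1nonneg hq1sum α
  -- assemble
  unfold condRenyi
  rw [hA, hB, hC, ← mul_add, ← mul_add]
  congr 1
  have h₁ : (∑ z : ZMod 2 × (Y1 × Y2), rpow0 (q1 z) α)
      / ((∑ y : Y1, rpow0 (∑ x : ZMod 2, p1 (x, y)) α)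
        * ∑ y : Y2, rpow0 (∑ x : ZMod 2, p2 (x, y)) α) ≠ 0 :=
    (div_pos hNq1 (mul_pos hD1 hD2)).ne'
  have h₂ : ((∑ z : ZMod 2 × Y1, rpow0 (p1 z) α) * ∑ z : ZMod 2 × Y2, rpow0 (p2 z) α)
      / (∑ z : ZMod 2 × (Y1 × Y2), rpow0 (q1 z) α) ≠ 0 :=
    (div_pos (mul_pos hN1 hN2) hNq1).ne'
  rw [← Real.logb_mul h₁ h₂]
  have hprod : (∑ z : ZMod 2 × (Y1 × Y2), rpow0 (q1 z) α)
      / ((∑ y : Y1, rpow0 (∑ x : ZMod 2, p1 (x, y)) α)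
        * ∑ y : Y2, rpow0 (∑ x : ZMod 2, p2 (x, y)) α)
      * (((∑ z : ZMod 2 × Y1, rpow0 (p1 z) α) * ∑ z : ZMod 2 × Y2, rpow0 (p2 z) α)
        / (∑ z : ZMod 2 × (Y1 × Y2), rpow0 (q1 z) α))
      = ((∑ z : ZMod 2 × Y1, rpow0 (p1 z) α) / ∑ y : Y1, rpow0 (∑ x : ZMod 2, p1 (x, y)) α)
        * ((∑ z : ZMod 2 × Y2, rpow0 (p2 z) α) / ∑ y : Y2, rpow0 (∑ x : ZMod 2, p2 (x, y)) α) := by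
    field_simp
  rw [hprod, Real.logb_mul (div_pos hN1 hD1).ne' (div_pos hN2 hD2).ne']
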